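/- Every causally non-separable bipartite process can be freely degraded to either definite causal order: Let W be a two-party process matrix on A_I ⊗ A_O ⊗ B_I ⊗ B_O that is causally non-separable. For a unit vector psi in A_O, let sigma_psi := (1_{A_I} ⊗ <psi|_{A_O} ⊗ 1_{B_I B_O}) W (1_{A_I} ⊗ |psi>_{A_O} ⊗ 1_{B_I B_O}) (a matrix on A_I ⊗ B_I ⊗ B_O) and let W_psi be the matrix on A_I ⊗ A_O ⊗ B_I ⊗ B_O obtained by tensoring sigma_psi with the identity 1_{A_O} in the A_O slot; define W_phi for unit vectors phi in B_O analogously with the roles of A and B exchanged. Then: (a) there exists a unit vector psi in A_O such that W_psi is a two-party process matrix that is causally ordered B≺A and is not free; and (b) there exists a unit vector phi in B_O such that W_phi is a two-party process matrix that is causally ordered A≺B and is not free. -/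

import Mathlib

open scoped BigOperators ComplexOrder

/-- Trace-and-replace map `D_X` on the collection `S` of tensor factors:
`D_S(W) = (1/d_S) * (1_S ⊗ tr_S(W))`, written entrywise. -/
noncomputable def Dset {ι : Type} [Fintype ι] [DecidableEq ι] {F : ι → Type}
    [∀ i, Fintype (F i)] [∀ i, DecidableEq (F i)]
    (S : Finset ι) (M : Matrix ((i : ι) → F i) ((i : ι) → F i) ℂ) :
    Matrix ((i : ι) → F i) ((i : ι) → F i) ℂ :=
  fun p q =>
    ((if ∀ i ∈ S, p i = q i then (1 : ℂ) else 0) / ∏ i ∈ S, (Fintype.card (F i) : ℂ)) *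
      ((∑ r : (i : ι) → F i,
          M (fun i => if i ∈ S then r i else p i) (fun i => if i ∈ S then r i else q i)) /
        ∏ i ∈ Sᶜ, (Fintype.card (F i) : ℂ))

/-- Index of the two-party space `A_I ⊗ A_O ⊗ B_I ⊗ B_O`:
slot `0 = A_I`, `1 = A_O`, `2 = B_I`, `3 = B_O`, with dimensions `d i`. -/
abbrev PIdx (d : Fin 4 → ℕ) : Type := (i : Fin 4) → Fin (d i)

abbrev PMat (d : Fin 4 → ℕ) : Type := Matrix (PIdx d) (PIdx d) ℂ

/-- The projector `L_V` onto the subspace of valid two-party process matrices. -/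
noncomputable def LV {d : Fin 4 → ℕ} (W : PMat d) : PMat d :=
  Dset ({1} : Finset (Fin 4)) W + Dset ({3} : Finset (Fin 4)) W
    - Dset ({1, 3} : Finset (Fin 4)) W - Dset ({2, 3} : Finset (Fin 4)) W
    + Dset ({1, 2, 3} : Finset (Fin 4)) W - Dset ({0, 1} : Finset (Fin 4)) W
    + Dset ({0, 1, 3} : Finset (Fin 4)) W

/-- Two-party process matrix: positive semidefinite, `L_V(W) = W`,
and `tr W = d_{A_O} * d_{B_O}`. -/
def IsProc {d : Fin 4 → ℕ} (W : PMat d) : Prop :=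
  W.PosSemidef ∧ LV W = W ∧ W.trace = (d 1 : ℂ) * (d 3 : ℂ)

/-- Free (non-signalling) process matrix: a process matrix with `D_{A_O B_O}(W) = W`. -/
def IsFree {d : Fin 4 → ℕ} (W : PMat d) : Prop :=
  IsProc W ∧ Dset ({1, 3} : Finset (Fin 4)) W = W

/-- Signalling robustness. -/
noncomputable def Rs {d : Fin 4 → ℕ} (W : PMat d) : ℝ :=
  sInf { s : ℝ | 0 ≤ s ∧ ∃ T C : PMat d, IsProc T ∧ IsFree C ∧
    W + (s : ℂ) • T = ((1 + s : ℝ) : ℂ) • C }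

/-- Causal order `A ≺ B`: `D_{B_O}(W) = W` and `D_{B_O B_I}(W) = D_{B_O B_I A_O}(W)`. -/
def OrderedAB {d : Fin 4 → ℕ} (W : PMat d) : Prop :=
  Dset ({3} : Finset (Fin 4)) W = W ∧
    Dset ({2, 3} : Finset (Fin 4)) W = Dset ({1, 2, 3} : Finset (Fin 4)) W

/-- Causal order `B ≺ A`: `D_{A_O}(W) = W` and `D_{A_O A_I}(W) = D_{A_O A_I B_O}(W)`. -/
def OrderedBA {d : Fin 4 → ℕ} (W : PMat d) : Prop :=
  Dset ({1} : Finset (Fin 4)) W = W ∧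
    Dset ({0, 1} : Finset (Fin 4)) W = Dset ({0, 1, 3} : Finset (Fin 4)) W

/-- Causally separable two-party process: a convex mixture of an `A ≺ B` and a `B ≺ A`
ordered process matrix. -/
def CausallySep {d : Fin 4 → ℕ} (W : PMat d) : Prop :=
  ∃ p : ℝ, 0 ≤ p ∧ p ≤ 1 ∧ ∃ W1 W2 : PMat d,
    IsProc W1 ∧ OrderedAB W1 ∧ IsProc W2 ∧ OrderedBA W2 ∧
    W = (p : ℂ) • W1 + ((1 - p : ℝ) : ℂ) • W2

/-- `W_ψ = ((1 ⊗ ⟨ψ|_{A_O} ⊗ 1) W (1 ⊗ |ψ⟩_{A_O} ⊗ 1)) ⊗ 1_{A_O}`, written entrywise. -/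
noncomputable def Wpsi {d : Fin 4 → ℕ} (W : PMat d) (ψ : Fin (d 1) → ℂ) : PMat d :=
  fun p q =>
    (if p 1 = q 1 then (1 : ℂ) else 0) *
      ∑ x : Fin (d 1), ∑ y : Fin (d 1),
        (starRingEnd ℂ) (ψ x) * W (Function.update p 1 x) (Function.update q 1 y) * ψ y

/-- `W_φ = ((1 ⊗ ⟨φ|_{B_O}) W (1 ⊗ |φ⟩_{B_O})) ⊗ 1_{B_O}`, written entrywise. -/
noncomputable def Wphi {d : Fin 4 → ℕ} (W : PMat d) (φ : Fin (d 3) → ℂ) : PMat d :=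
  fun p q =>
    (if p 3 = q 3 then (1 : ℂ) else 0) *
      ∑ x : Fin (d 3), ∑ y : Fin (d 3),
        (starRingEnd ℂ) (φ x) * W (Function.update p 3 x) (Function.update q 3 y) * φ y

/-!
The degraded matrix `W_ψ` is `∑ z, K_zᴴ W K_z` for the operators `K_z` replacing the entry `z` of
slot `A_O` by `ψ`, so it is positive. The map `W ↦ W_ψ` commutes with every trace-and-replace map
`D_X` with `A_O ∉ X`, and `D_{A_O} W_ψ = W_ψ`; through these rules the validity of `W`, in the form
`D_{A_I} W = D_{A_I B_O} W` and `D_{B_I B_O} W = D_{A_O B_I B_O} W`, makes `W_ψ` a process ordered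
`B ≺ A`. If `W_ψ` were free for every unit `ψ`, then `(D_{B_O} W)_ψ = D_{A_O B_O} W_ψ = W_ψ` for all
`ψ`, and polarisation gives `D_{B_O} W = W`; with `D_{B_I B_O} W = D_{A_O B_I B_O} W` this makes `W`
ordered `A ≺ B`, hence causally separable. Part (b) exchanges the roles of the two parties.
-/

open Matrix

section Dset

variable {ι : Type} [DecidableEq ι] {F : ι → Type}

theorem piecewise_piecewise_union (S T : Finset ι) (s r p : ∀ i, F i) :
    T.piecewise s (S.piecewise r p) = (S ∪ T).piecewise (T.piecewise s r) p := by
  ext i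
  by_cases hT : i ∈ T <;> by_cases hS : i ∈ S <;> simp [hT, hS]

variable [Fintype ι] [∀ i, Fintype (F i)]

theorem sum_sum_piecewise (S : Finset ι) (Φ : (∀ i, F i) → ℂ) :
    ∑ s, ∑ r, Φ (S.piecewise s r) = Fintype.card (∀ i, F i) * ∑ t, Φ t := by
  have swap : Function.Involutive fun x : (∀ i, F i) × (∀ i, F i) =>
      (S.piecewise x.1 x.2, S.piecewise x.2 x.1) := by
    rintro ⟨s, r⟩
    ext i <;> by_cases hi : i ∈ S <;> simp [hi]
  calc ∑ s, ∑ r, Φ (S.piecewise s r)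
      = ∑ x : (∀ i, F i) × (∀ i, F i), Φ (swap.toPerm _ x).1 :=
        (Fintype.sum_prod_type' fun s r => Φ (S.piecewise s r)).symm
    _ = ∑ x : (∀ i, F i) × (∀ i, F i), Φ x.1 := Equiv.sum_comp (swap.toPerm _) fun x => Φ x.1
    _ = Fintype.card (∀ i, F i) * ∑ t, Φ t := by
      rw [Fintype.sum_prod_type]; simp [Finset.mul_sum]

theorem natCast_card_pi_ne_zero (p : ∀ i, F i) : (Fintype.card (∀ i, F i) : ℂ) ≠ 0 := by
  have : Nonempty (∀ i, F i) := ⟨p⟩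
  exact_mod_cast Fintype.card_ne_zero

variable [∀ i, DecidableEq (F i)]

theorem Dset_apply (S : Finset ι) (M : Matrix (∀ i, F i) (∀ i, F i) ℂ) (p q : ∀ i, F i) :
    Dset S M p q = if ∀ i ∈ S, p i = q i then
      (∑ r, M (S.piecewise r p) (S.piecewise r q)) / Fintype.card (∀ i, F i) else 0 := by
  rw [Dset, div_mul_div_comm, Finset.prod_mul_prod_compl, ← Nat.cast_prod, ← Fintype.card_pi]
  split_ifs
  · rw [one_mul]; rfl
  · rw [zero_mul, zero_div]

theorem Dset_Dset (S T : Finset ι) (M : Matrix (∀ i, F i) (∀ i, F i) ℂ) :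
    Dset S (Dset T M) = Dset (S ∪ T) M := by
  ext p q
  simp only [Dset_apply]
  by_cases hS : ∀ i ∈ S, p i = q i
  · have agree : ∀ r : ∀ i, F i,
        (∀ i ∈ T, S.piecewise r p i = S.piecewise r q i) ↔ ∀ i ∈ S ∪ T, p i = q i := by
      refine fun r => ⟨fun h i hi => ?_, fun h i hi => ?_⟩
      · by_cases hiS : i ∈ S
        · exact hS i hiS
        · simpa [hiS] using h i ((Finset.mem_union.1 hi).resolve_left hiS)
      · by_cases hiS : i ∈ S <;> simp [hiS, h i (Finset.mem_union_right S hi)]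
    simp only [if_pos hS, agree, piecewise_piecewise_union]
    split_ifs
    · rw [← Finset.sum_div, Finset.sum_comm,
        sum_sum_piecewise T fun t => M ((S ∪ T).piecewise t p) ((S ∪ T).piecewise t q),
        div_div, mul_div_mul_left _ _ (natCast_card_pi_ne_zero p)]
    · simp
  · rw [if_neg hS, if_neg fun h => hS fun i hi => h i (Finset.mem_union_left T hi)]

theorem Dset_comm (S T : Finset ι) (M : Matrix (∀ i, F i) (∀ i, F i) ℂ) :
    Dset S (Dset T M) = Dset T (Dset S M) := by
  rw [Dset_Dset, Dset_Dset, Finset.union_comm]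

theorem Dset_Dset_self (S : Finset ι) (M : Matrix (∀ i, F i) (∀ i, F i) ℂ) :
    Dset S (Dset S M) = Dset S M := by
  rw [Dset_Dset, Finset.union_self]

theorem Dset_insert (a : ι) (S : Finset ι) (M : Matrix (∀ i, F i) (∀ i, F i) ℂ) :
    Dset (insert a S) M = Dset {a} (Dset S M) := by
  rw [Dset_Dset, Finset.insert_eq]

theorem Dset_add (S : Finset ι) (M N : Matrix (∀ i, F i) (∀ i, F i) ℂ) :
    Dset S (M + N) = Dset S M + Dset S N := by
  ext p q
  simp only [Matrix.add_apply, Dset_apply, Finset.sum_add_distrib, add_div]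
  split_ifs <;> simp

theorem Dset_sub (S : Finset ι) (M N : Matrix (∀ i, F i) (∀ i, F i) ℂ) :
    Dset S (M - N) = Dset S M - Dset S N := by
  ext p q
  simp only [Matrix.sub_apply, Dset_apply, Finset.sum_sub_distrib, sub_div]
  split_ifs <;> simp

theorem Dset_smul (S : Finset ι) (c : ℂ) (M : Matrix (∀ i, F i) (∀ i, F i) ℂ) :
    Dset S (c • M) = c • Dset S M := by
  ext p q
  simp only [Matrix.smul_apply, Dset_apply, smul_eq_mul, ← Finset.mul_sum, mul_div_assoc]
  split_ifs <;> simp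

theorem trace_Dset (S : Finset ι) (M : Matrix (∀ i, F i) (∀ i, F i) ℂ) :
    (Dset S M).trace = M.trace := by
  rcases isEmpty_or_nonempty (∀ i, F i) with h | ⟨⟨p⟩⟩
  · simp [Matrix.trace]
  simp only [Matrix.trace, Matrix.diag, Dset_apply, forall₂_true_iff, if_true]
  rw [← Finset.sum_div, Finset.sum_comm, sum_sum_piecewise S fun t => M t t,
    mul_div_cancel_left₀ _ (natCast_card_pi_ne_zero p)]

theorem Dset_one (S : Finset ι) : Dset S (1 : Matrix (∀ i, F i) (∀ i, F i) ℂ) = 1 := by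
  ext p q
  rw [Dset_apply]
  split_ifs with hS
  · have agree : ∀ r, S.piecewise r p = S.piecewise r q ↔ p = q := fun r => by
      refine ⟨fun h => funext fun i => ?_, fun h => h ▸ rfl⟩
      by_cases hi : i ∈ S
      · exact hS i hi
      · simpa [hi] using congrFun h i
    simp only [Matrix.one_apply, agree, Finset.sum_const, Finset.card_univ, nsmul_eq_mul,
      mul_ite, mul_one, mul_zero]
    split_ifs
    · exact div_self (natCast_card_pi_ne_zero p)
    · exact zero_div _
  · rw [Matrix.one_apply_ne fun h => hS fun i _ => congrFun h i]

end Dset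

section Polarization

variable {n : Type*} [Fintype n] [DecidableEq n]

theorem Matrix.eq_zero_of_forall_dotProduct_mulVec_self_eq_zero {B : Matrix n n ℂ}
    (h : ∀ v : n → ℂ, star v ⬝ᵥ B *ᵥ v = 0) : B = 0 := by
  refine toEuclideanLin.map_eq_zero_iff.1 <| (inner_map_self_eq_zero _).1 fun x => ?_
  rw [EuclideanSpace.inner_eq_star_dotProduct, ofLp_toLpLin, toLin'_apply, dotProduct_comm,
    star_dotProduct, h, star_zero]

theorem Matrix.eq_zero_of_forall_unit_dotProduct_mulVec_self_eq_zero {B : Matrix n n ℂ}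
    (h : ∀ v : n → ℂ, ∑ i, Complex.normSq (v i) = 1 → star v ⬝ᵥ B *ᵥ v = 0) : B = 0 := by
  refine eq_zero_of_forall_dotProduct_mulVec_self_eq_zero fun v => ?_
  by_cases hv : v = 0
  · simp [hv]
  obtain ⟨i, hi⟩ := Function.ne_iff.1 hv
  set s := ∑ i, Complex.normSq (v i)
  have hs : 0 < s := Finset.sum_pos' (fun j _ => Complex.normSq_nonneg _)
    ⟨i, Finset.mem_univ _, Complex.normSq_pos.2 hi⟩
  set c : ℝ := (Real.sqrt s)⁻¹
  have hu := h ((c : ℂ) • v) (by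
    simp only [Pi.smul_apply, smul_eq_mul, Complex.normSq_mul, Complex.normSq_ofReal,
      ← Finset.mul_sum, c]
    rw [← mul_inv, Real.mul_self_sqrt hs.le]
    exact inv_mul_cancel₀ hs.ne')
  simpa [Matrix.mulVec_smul, c, Real.sqrt_eq_zero', not_le.2 hs] using hu

end Polarization

section Degrade

variable {ι : Type} [DecidableEq ι] {F : ι → Type} [∀ i, Fintype (F i)] [∀ i, DecidableEq (F i)]

noncomputable def degradeAt (k : ι) (W : Matrix (∀ i, F i) (∀ i, F i) ℂ) (ψ : F k → ℂ) :
    Matrix (∀ i, F i) (∀ i, F i) ℂ :=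
  fun p q => (if p k = q k then 1 else 0) *
    ∑ x, ∑ y, (starRingEnd ℂ) (ψ x) * W (Function.update p k x) (Function.update q k y) * ψ y

theorem eq_of_forall_degradeAt_eq {k : ι} {V W : Matrix (∀ i, F i) (∀ i, F i) ℂ}
    (h : ∀ ψ : F k → ℂ, ∑ x, Complex.normSq (ψ x) = 1 → degradeAt k V ψ = degradeAt k W ψ) :
    V = W := by
  ext p q
  let B : Matrix (F k) (F k) ℂ := fun x y =>
    V (Function.update p k x) (Function.update q k y) -
      W (Function.update p k x) (Function.update q k y)
  have hB : B = 0 := Matrix.eq_zero_of_forall_unit_dotProduct_mulVec_self_eq_zero fun ψ hψ => by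
    have := congrFun₂ (h ψ hψ) (Function.update p k (q k)) q
    simp only [degradeAt, Function.update_self, if_true, one_mul, Function.update_idem] at this
    simp only [dotProduct, mulVec, B, Pi.star_apply, Finset.mul_sum, mul_sub, sub_mul,
      Finset.sum_sub_distrib, Complex.star_def, ← mul_assoc, this, sub_self]
  simpa [B, sub_eq_zero] using congrFun₂ hB (p k) (q k)

variable [Fintype ι]

/-- `slotKraus k ψ z` maps `|z⟩_k ⊗ |r⟩` to `|ψ⟩_k ⊗ |r⟩` and kills the other basis states of
slot `k`. -/
def slotKraus (k : ι) (ψ : F k → ℂ) (z : F k) : Matrix (∀ i, F i) (∀ i, F i) ℂ :=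
  fun q' q => if q k = z then ∑ y, if q' = Function.update q k y then ψ y else 0 else 0

theorem mul_slotKraus_apply (k : ι) (ψ : F k → ℂ) (z : F k) (M : Matrix (∀ i, F i) (∀ i, F i) ℂ)
    (p q : ∀ i, F i) :
    (M * slotKraus k ψ z) p q = if q k = z then ∑ y, M p (Function.update q k y) * ψ y else 0 := by
  simp only [mul_apply, slotKraus, mul_ite, mul_zero, Finset.mul_sum]
  split_ifs
  · rw [Finset.sum_comm]
    simp
  · simp

theorem slotKraus_conjTranspose_mul_apply (k : ι) (ψ : F k → ℂ) (z : F k)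
    (M : Matrix (∀ i, F i) (∀ i, F i) ℂ) (p q : ∀ i, F i) :
    ((slotKraus k ψ z)ᴴ * M) p q =
      if p k = z then ∑ x, (starRingEnd ℂ) (ψ x) * M (Function.update p k x) q else 0 := by
  rw [← conjTranspose_conjTranspose ((slotKraus k ψ z)ᴴ * M), conjTranspose_mul,
    conjTranspose_conjTranspose, conjTranspose_apply, mul_slotKraus_apply]
  split_ifs <;> simp [star_sum, mul_comm]

theorem degradeAt_eq_sum_slotKraus (k : ι) (W : Matrix (∀ i, F i) (∀ i, F i) ℂ) (ψ : F k → ℂ) :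
    degradeAt k W ψ = ∑ z, (slotKraus k ψ z)ᴴ * W * slotKraus k ψ z := by
  ext p q
  simp only [Matrix.sum_apply, Matrix.mul_assoc, slotKraus_conjTranspose_mul_apply,
    mul_slotKraus_apply, degradeAt]
  simp only [Finset.sum_ite_eq, Finset.mem_univ, if_true]
  by_cases h : p k = q k
  · simp [h, Finset.mul_sum, mul_assoc]
  · simp [h, Ne.symm h]

theorem posSemidef_degradeAt (k : ι) {W : Matrix (∀ i, F i) (∀ i, F i) ℂ} (hW : W.PosSemidef)
    (ψ : F k → ℂ) : (degradeAt k W ψ).PosSemidef := by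
  rw [degradeAt_eq_sum_slotKraus]
  exact posSemidef_sum _ fun z _ => hW.conjTranspose_mul_mul_same _

theorem Dset_degradeAt_of_notMem {k : ι} {S : Finset ι} (hk : k ∉ S)
    (W : Matrix (∀ i, F i) (∀ i, F i) ℂ) (ψ : F k → ℂ) :
    Dset S (degradeAt k W ψ) = degradeAt k (Dset S W) ψ := by
  ext p q
  have agree : ∀ x y, (∀ i ∈ S, Function.update p k x i = Function.update q k y i) ↔
      ∀ i ∈ S, p i = q i := fun x y => by
    refine forall₂_congr fun i hi => ?_
    rw [Function.update_of_ne (ne_of_mem_of_not_mem hi hk),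
      Function.update_of_ne (ne_of_mem_of_not_mem hi hk)]
  simp only [degradeAt, Dset_apply, agree, Finset.piecewise_eq_of_notMem _ _ _ hk,
    Finset.update_piecewise_of_notMem _ _ _ hk]
  split_ifs <;> simp only [one_mul, zero_mul, mul_zero, Finset.sum_const_zero, zero_div]
  simp only [Finset.mul_sum, Finset.sum_mul, Finset.sum_div]
  rw [Finset.sum_comm]
  refine Finset.sum_congr rfl fun x _ => ?_
  rw [Finset.sum_comm]
  exact Finset.sum_congr rfl fun y _ => Finset.sum_congr rfl fun r _ => by ring

theorem Dset_singleton_degradeAt (k : ι) (W : Matrix (∀ i, F i) (∀ i, F i) ℂ) (ψ : F k → ℂ) :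
    Dset {k} (degradeAt k W ψ) = degradeAt k W ψ := by
  ext p q
  simp only [Dset_apply, Finset.mem_singleton, forall_eq, Finset.piecewise_singleton,
    degradeAt, Function.update_self, if_true, one_mul, Function.update_idem, Finset.sum_const,
    Finset.card_univ, nsmul_eq_mul, mul_div_cancel_left₀ _ (natCast_card_pi_ne_zero p)]
  split_ifs <;> simp

theorem degradeAt_Dset_singleton (k : ι) (U : Matrix (∀ i, F i) (∀ i, F i) ℂ) {ψ : F k → ℂ}
    (hψ : ∑ x, Complex.normSq (ψ x) = 1) : degradeAt k (Dset {k} U) ψ = Dset {k} U := by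
  ext p q
  have hnorm : ∑ x, (starRingEnd ℂ) (ψ x) * ψ x = 1 := by
    simp_rw [← Complex.normSq_eq_conj_mul_self]
    exact_mod_cast hψ
  simp only [degradeAt, Dset_apply, Finset.mem_singleton, forall_eq, Function.update_self,
    Finset.piecewise_singleton, Function.update_idem]
  split_ifs with hpq
  · simp only [one_mul, mul_ite, ite_mul, mul_zero, zero_mul, Finset.sum_ite_eq, Finset.mem_univ,
      if_true]
    simp_rw [mul_right_comm _ _ (ψ _), ← Finset.sum_mul, hnorm, one_mul]
  · simp

theorem degradeAt_Dset_of_mem {k : ι} {S : Finset ι} (hk : k ∈ S)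
    (U : Matrix (∀ i, F i) (∀ i, F i) ℂ) {ψ : F k → ℂ} (hψ : ∑ x, Complex.normSq (ψ x) = 1) :
    degradeAt k (Dset S U) ψ = Dset S U := by
  rw [← Finset.insert_eq_of_mem hk, Dset_insert, degradeAt_Dset_singleton k _ hψ]

theorem trace_degradeAt {k : ι} {S T : Finset ι} (hkS : k ∉ S) (hkT : k ∈ T)
    {W : Matrix (∀ i, F i) (∀ i, F i) ℂ} (hW : Dset S W = Dset T W) {ψ : F k → ℂ}
    (hψ : ∑ x, Complex.normSq (ψ x) = 1) : (degradeAt k W ψ).trace = W.trace := by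
  rw [← trace_Dset S, Dset_degradeAt_of_notMem hkS, hW, degradeAt_Dset_of_mem hkT _ hψ,
    trace_Dset]

end Degrade

section TwoParty

variable {d : Fin 4 → ℕ} {W : PMat d}

theorem Wpsi_eq_degradeAt (ψ : Fin (d 1) → ℂ) : Wpsi W ψ = degradeAt 1 W ψ := rfl

theorem Wphi_eq_degradeAt (φ : Fin (d 3) → ℂ) : Wphi W φ = degradeAt 3 W φ := rfl

theorem Dset_23_eq_Dset_123 (hLV : LV W = W) : Dset {2, 3} W = Dset {1, 2, 3} W := by
  have h := congrArg (Dset {3}) hLV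
  -- normal form: every `Dset X` becomes a composite of the maps `Dset {i}` in a fixed order
  simp only [LV, Dset_add, Dset_sub, Dset_insert, Dset_comm, Dset_Dset_self] at h ⊢
  linear_combination (norm := abel) -h

theorem Dset_01_eq_Dset_013 (hLV : LV W = W) : Dset {0, 1} W = Dset {0, 1, 3} W := by
  have h := congrArg (Dset {1}) hLV
  simp only [LV, Dset_add, Dset_sub, Dset_insert, Dset_comm, Dset_Dset_self] at h ⊢
  linear_combination (norm := abel) -h

theorem Dset_0_eq_Dset_03 (hLV : LV W = W) : Dset {0} W = Dset {0, 3} W := by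
  have h := congrArg (Dset {0}) hLV
  have h23 := congrArg (Dset {0}) (Dset_23_eq_Dset_123 hLV)
  simp only [LV, Dset_add, Dset_sub, Dset_insert, Dset_Dset_self] at h h23 ⊢
  linear_combination (norm := abel) -h - h23

theorem Dset_2_eq_Dset_12 (hLV : LV W = W) : Dset {2} W = Dset {1, 2} W := by
  have h := congrArg (Dset {2}) hLV
  have h01 := congrArg (Dset {2}) (Dset_01_eq_Dset_013 hLV)
  simp only [LV, Dset_add, Dset_sub, Dset_insert, Dset_comm, Dset_Dset_self] at h h01 ⊢
  linear_combination (norm := abel) -h - h01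

theorem isProc_Wpsi (hW : IsProc W) {ψ : Fin (d 1) → ℂ} (hψ : ∑ x, Complex.normSq (ψ x) = 1) :
    IsProc (Wpsi W ψ) := by
  obtain ⟨hPSD, hLV, htr⟩ := hW
  refine ⟨posSemidef_degradeAt 1 hPSD ψ, ?_, ?_⟩
  · simp (disch := decide) only [Wpsi_eq_degradeAt, LV, Dset_insert, Dset_singleton_degradeAt,
      Dset_degradeAt_of_notMem]
    rw [← Dset_insert 0 {3} W, ← Dset_0_eq_Dset_03 hLV]
    abel
  · rw [Wpsi_eq_degradeAt, trace_degradeAt (by decide) (by decide) (Dset_23_eq_Dset_123 hLV) hψ,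
      htr]

theorem orderedBA_Wpsi (hLV : LV W = W) (ψ : Fin (d 1) → ℂ) : OrderedBA (Wpsi W ψ) := by
  refine ⟨Dset_singleton_degradeAt 1 W ψ, ?_⟩
  simp (disch := decide) only [Wpsi_eq_degradeAt, Dset_insert, Dset_singleton_degradeAt,
    Dset_degradeAt_of_notMem]
  rw [← Dset_insert 0 {3} W, Dset_0_eq_Dset_03 hLV]

theorem Dset_13_Wpsi (ψ : Fin (d 1) → ℂ) :
    Dset {1, 3} (Wpsi W ψ) = degradeAt 1 (Dset {3} W) ψ := by
  simp (disch := decide) only [Wpsi_eq_degradeAt, Dset_insert, Dset_singleton_degradeAt,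
    Dset_degradeAt_of_notMem]

theorem isProc_Wphi (hW : IsProc W) {φ : Fin (d 3) → ℂ} (hφ : ∑ x, Complex.normSq (φ x) = 1) :
    IsProc (Wphi W φ) := by
  obtain ⟨hPSD, hLV, htr⟩ := hW
  refine ⟨posSemidef_degradeAt 3 hPSD φ, ?_, ?_⟩
  · simp (disch := decide) only [Wphi_eq_degradeAt, LV, Dset_insert, Dset_singleton_degradeAt,
      Dset_degradeAt_of_notMem]
    rw [← Dset_insert 1 {2} W, ← Dset_2_eq_Dset_12 hLV]
    abel
  · rw [Wphi_eq_degradeAt, trace_degradeAt (by decide) (by decide) (Dset_01_eq_Dset_013 hLV) hφ,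
      htr]

theorem orderedAB_Wphi (hLV : LV W = W) (φ : Fin (d 3) → ℂ) : OrderedAB (Wphi W φ) := by
  refine ⟨Dset_singleton_degradeAt 3 W φ, ?_⟩
  simp (disch := decide) only [Wphi_eq_degradeAt, Dset_insert, Dset_singleton_degradeAt,
    Dset_degradeAt_of_notMem]
  rw [← Dset_insert 1 {2} W, Dset_2_eq_Dset_12 hLV]

theorem Dset_13_Wphi (φ : Fin (d 3) → ℂ) :
    Dset {1, 3} (Wphi W φ) = degradeAt 3 (Dset {1} W) φ := by
  simp (disch := decide) only [Wphi_eq_degradeAt, Dset_insert, Dset_singleton_degradeAt,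
    Dset_degradeAt_of_notMem]

noncomputable def maximallyMixedProcess (d : Fin 4 → ℕ) : PMat d :=
  ((d 1 * d 3 : ℂ) / Fintype.card (PIdx d)) • 1

theorem isProc_maximallyMixedProcess (hW : IsProc W) : IsProc (maximallyMixedProcess d) := by
  refine ⟨Matrix.PosSemidef.one.smul (by positivity), ?_, ?_⟩
  · simp only [maximallyMixedProcess, LV, Dset_smul, Dset_one]
    abel
  · rw [maximallyMixedProcess, Matrix.trace_smul, Matrix.trace_one, smul_eq_mul]
    rcases isEmpty_or_nonempty (PIdx d) with h | ⟨⟨p⟩⟩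
    · simpa [Matrix.trace] using hW.2.2
    · exact div_mul_cancel₀ _ (natCast_card_pi_ne_zero p)

theorem orderedAB_maximallyMixedProcess : OrderedAB (maximallyMixedProcess d) := by
  simp only [OrderedAB, maximallyMixedProcess, Dset_smul, Dset_one, and_self]

theorem orderedBA_maximallyMixedProcess : OrderedBA (maximallyMixedProcess d) := by
  simp only [OrderedBA, maximallyMixedProcess, Dset_smul, Dset_one, and_self]

theorem causallySep_of_orderedAB (hW : IsProc W) (hAB : OrderedAB W) : CausallySep W :=
  ⟨1, zero_le_one, le_rfl, W, maximallyMixedProcess d, hW, hAB, isProc_maximallyMixedProcess hW,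
    orderedBA_maximallyMixedProcess, by simp⟩

theorem causallySep_of_orderedBA (hW : IsProc W) (hBA : OrderedBA W) : CausallySep W :=
  ⟨0, le_rfl, zero_le_one, maximallyMixedProcess d, W, isProc_maximallyMixedProcess hW,
    orderedAB_maximallyMixedProcess, hW, hBA, by simp⟩

end TwoParty

theorem cns_degrades_to_both_orders_general {d : Fin 4 → ℕ}
    (W : PMat d) (hW : IsProc W) (hns : ¬ CausallySep W) :
    (∃ ψ : Fin (d 1) → ℂ, (∑ x, Complex.normSq (ψ x)) = 1 ∧
      IsProc (Wpsi W ψ) ∧ OrderedBA (Wpsi W ψ) ∧ ¬ IsFree (Wpsi W ψ)) ∧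
    (∃ φ : Fin (d 3) → ℂ, (∑ x, Complex.normSq (φ x)) = 1 ∧
      IsProc (Wphi W φ) ∧ OrderedAB (Wphi W φ) ∧ ¬ IsFree (Wphi W φ)) := by
  have hLV := hW.2.1
  constructor
  · by_contra! hfree
    have h3 : Dset {3} W = W := eq_of_forall_degradeAt_eq fun ψ hψ =>
      (Dset_13_Wpsi ψ).symm.trans (hfree ψ hψ (isProc_Wpsi hW hψ) (orderedBA_Wpsi hLV ψ)).2
    exact hns (causallySep_of_orderedAB hW ⟨h3, Dset_23_eq_Dset_123 hLV⟩)
  · by_contra! hfree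
    have h1 : Dset {1} W = W := eq_of_forall_degradeAt_eq fun φ hφ =>
      (Dset_13_Wphi φ).symm.trans (hfree φ hφ (isProc_Wphi hW hφ) (orderedAB_Wphi hLV φ)).2
    exact hns (causallySep_of_orderedBA hW ⟨h1, Dset_01_eq_Dset_013 hLV⟩)

/-- Every causally non-separable bipartite process can be freely degraded to either
definite causal order: there is a unit vector `ψ` in `A_O` with `W_ψ` a non-free process
causally ordered `B ≺ A`, and a unit vector `φ` in `B_O` with `W_φ` a non-free process
causally ordered `A ≺ B`. -/
theorem cns_degrades_to_both_orders {d : Fin 4 → ℕ} (hd : ∀ i, 0 < d i)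
    (W : PMat d) (hW : IsProc W) (hns : ¬ CausallySep W) :
    (∃ ψ : Fin (d 1) → ℂ, (∑ x, Complex.normSq (ψ x)) = 1 ∧
      IsProc (Wpsi W ψ) ∧ OrderedBA (Wpsi W ψ) ∧ ¬ IsFree (Wpsi W ψ)) ∧
    (∃ φ : Fin (d 3) → ℂ, (∑ x, Complex.normSq (φ x)) = 1 ∧
      IsProc (Wphi W φ) ∧ OrderedAB (Wphi W φ) ∧ ¬ IsFree (Wphi W φ)) :=
  cns_degrades_to_both_orders_general W hW hns
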